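/- Let Q(Y) = −½ Y^{μν} Y^{ρσ} ε_{μνρσ} be the quadratic form on ω^⊥ ⊂ Λ²ℝ⁴. Then for every A ∈ Sp(ω) (linear maps preserving ω = e¹∧e⁴ + e²∧e³), the induced action on bivectors Y ↦ Λ²(A⁻¹)(Y) preserves ω^⊥ and satisfies Q(Λ²(A⁻¹)Y) = Q(Y). Hence there is a group homomorphism from Sp(4, ℝ) to the orthogonal group of the 5-dimensional quadratic form Q of signature (2,3). -/
import Mathlib


open Matrix

/- Bivectors on V = ℝ⁴ modeled by their components Y^{μν}: antisymmetric 4×4 matrices.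
   The symplectic form ω = e¹∧e⁴ + e²∧e³ has components ω_{μν} given by `omegaM`
   (indices 0,...,3 stand for 1,...,4). -/

/-- the component matrix ω_{μν} of ω = e¹∧e⁴ + e²∧e³ -/
def omegaM : Matrix (Fin 4) (Fin 4) ℝ :=
  !![0, 0, 0, 1; 0, 0, 1, 0; 0, -1, 0, 0; -1, 0, 0, 0]

/-- the pairing Y^{μν} ω_{μν} of a bivector with ω -/
def pairOmega (Y : Matrix (Fin 4) (Fin 4) ℝ) : ℝ :=
  ∑ μ : Fin 4, ∑ ν : Fin 4, Y μ ν * omegaM μ ν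

/-- the Levi-Civita symbol ε_{μνρσ} on four Fin 4 indices -/
noncomputable def eps (μ ν ρ σ : Fin 4) : ℝ :=
  ∑ g : Equiv.Perm (Fin 4),
    if (μ, ν, ρ, σ) = (g 0, g 1, g 2, g 3) then ((Equiv.Perm.sign g : ℤ) : ℝ) else 0

/-- the quadratic form Q(Y) = −½ Y^{μν} Y^{ρσ} ε_{μνρσ} on bivectors -/
noncomputable def Q (Y : Matrix (Fin 4) (Fin 4) ℝ) : ℝ :=
  -(1 / 2) * ∑ μ : Fin 4, ∑ ν : Fin 4, ∑ ρ : Fin 4, ∑ σ : Fin 4,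
    Y μ ν * Y ρ σ * eps μ ν ρ σ

/-- the induced action of A ∈ GL(4,ℝ) on bivector components:
    (AY)^{μν} = (A⁻¹)^μ_α (A⁻¹)^ν_β Y^{αβ}, i.e. A⁻¹ Y (A⁻¹)ᵀ -/
noncomputable def bivAct (A Y : Matrix (Fin 4) (Fin 4) ℝ) : Matrix (Fin 4) (Fin 4) ℝ :=
  A⁻¹ * Y * (A⁻¹)ᵀ

/-! ### Auxiliary machinery -/

/-- integer Levi-Civita symbol -/
def zeps (μ ν ρ σ : Fin 4) : ℤ :=
  ∑ g : Equiv.Perm (Fin 4),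
    if (μ, ν, ρ, σ) = (g 0, g 1, g 2, g 3) then ((Equiv.Perm.sign g : ℤ)) else 0

/-- explicit formula for the Levi-Civita symbol -/
def zf (μ ν ρ σ : Fin 4) : ℤ :=
  (((ν:ℤ)-μ)*((ρ:ℤ)-μ)*((σ:ℤ)-μ)*((ρ:ℤ)-ν)*((σ:ℤ)-ν)*((σ:ℤ)-ρ))/12

theorem zeps_val : ∀ μ ν ρ σ : Fin 4, zeps μ ν ρ σ = zf μ ν ρ σ := by decide

lemma eps_eq (μ ν ρ σ : Fin 4) : eps μ ν ρ σ = ((zf μ ν ρ σ : ℤ) : ℝ) := by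
  rw [← zeps_val, zeps, eps]
  push_cast
  rfl

/-- the Pfaffian of an antisymmetric 4×4 matrix -/
def pf (Y : Matrix (Fin 4) (Fin 4) ℝ) : ℝ := Y 0 1 * Y 2 3 - Y 0 2 * Y 1 3 + Y 0 3 * Y 1 2

/-- an explicit determinant polynomial -/
def mydet (M : Matrix (Fin 4) (Fin 4) ℝ) : ℝ :=
   M 0 0*(M 1 1*(M 2 2*M 3 3-M 2 3*M 3 2) - M 1 2*(M 2 1*M 3 3-M 2 3*M 3 1) + M 1 3*(M 2 1*M 3 2-M 2 2*M 3 1))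
  -M 0 1*(M 1 0*(M 2 2*M 3 3-M 2 3*M 3 2) - M 1 2*(M 2 0*M 3 3-M 2 3*M 3 0) + M 1 3*(M 2 0*M 3 2-M 2 2*M 3 0))
  +M 0 2*(M 1 0*(M 2 1*M 3 3-M 2 3*M 3 1) - M 1 1*(M 2 0*M 3 3-M 2 3*M 3 0) + M 1 3*(M 2 0*M 3 1-M 2 1*M 3 0))
  -M 0 3*(M 1 0*(M 2 1*M 3 2-M 2 2*M 3 1) - M 1 1*(M 2 0*M 3 2-M 2 2*M 3 0) + M 1 2*(M 2 0*M 3 1-M 2 1*M 3 0))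

set_option maxHeartbeats 2000000 in
/-- Q is −4 times the Pfaffian on antisymmetric matrices -/
lemma Q_eq_pf (Y : Matrix (Fin 4) (Fin 4) ℝ) (h : Yᵀ = -Y) : Q Y = -4 * pf Y := by
  have e : ∀ i j : Fin 4, Y j i = - Y i j := fun i j => by
    have := congrFun (congrFun h i) j
    simpa [Matrix.transpose_apply] using this
  have h00 : Y 0 0 = 0 := by have := e 0 0; linarith
  have h11 : Y 1 1 = 0 := by have := e 1 1; linarith
  have h22 : Y 2 2 = 0 := by have := e 2 2; linarith
  have h33 : Y 3 3 = 0 := by have := e 3 3; linarith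
  simp only [Q, Fin.sum_univ_four, eps_eq]
  have c0 : ((0:Fin 4):ℤ) = 0 := rfl
  have c1 : ((1:Fin 4):ℤ) = 1 := rfl
  have c2 : ((2:Fin 4):ℤ) = 2 := rfl
  have c3 : ((3:Fin 4):ℤ) = 3 := rfl
  norm_num [zf, pf, c0, c1, c2, c3, e 0 1, e 0 2, e 0 3, e 1 2, e 1 3, e 2 3, h00, h11, h22, h33]
  ring

set_option maxHeartbeats 4000000 in
/-- the Pfaffian transforms with the determinant under congruence -/
lemma pf_conj (B Y : Matrix (Fin 4) (Fin 4) ℝ) (h : Yᵀ = -Y) :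
    pf (B * Y * Bᵀ) = mydet B * pf Y := by
  have e : ∀ i j : Fin 4, Y j i = - Y i j := fun i j => by
    have := congrFun (congrFun h i) j
    simpa [Matrix.transpose_apply] using this
  have h00 : Y 0 0 = 0 := by have := e 0 0; linarith
  have h11 : Y 1 1 = 0 := by have := e 1 1; linarith
  have h22 : Y 2 2 = 0 := by have := e 2 2; linarith
  have h33 : Y 3 3 = 0 := by have := e 3 3; linarith
  simp only [pf, mydet, Matrix.mul_apply, Matrix.transpose_apply, Fin.sum_univ_four,
    e 0 1, e 0 2, e 0 3, e 1 2, e 1 3, e 2 3, h00, h11, h22, h33]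
  ring

set_option maxHeartbeats 2000000 in
/-- Pfaffian of AᵀωA equals the determinant of A -/
lemma pf_omega_conj (A : Matrix (Fin 4) (Fin 4) ℝ) : pf (Aᵀ * omegaM * A) = mydet A := by
  simp only [pf, mydet, Matrix.mul_apply, Matrix.transpose_apply, Fin.sum_univ_four,
    show omegaM 0 0 = 0 from rfl, show omegaM 0 1 = 0 from rfl, show omegaM 0 2 = 0 from rfl,
    show omegaM 0 3 = 1 from rfl, show omegaM 1 0 = 0 from rfl, show omegaM 1 1 = 0 from rfl,
    show omegaM 1 2 = 1 from rfl, show omegaM 1 3 = 0 from rfl, show omegaM 2 0 = 0 from rfl,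
    show omegaM 2 1 = -1 from rfl, show omegaM 2 2 = 0 from rfl, show omegaM 2 3 = 0 from rfl,
    show omegaM 3 0 = -1 from rfl, show omegaM 3 1 = 0 from rfl, show omegaM 3 2 = 0 from rfl,
    show omegaM 3 3 = 0 from rfl]
  ring

set_option maxHeartbeats 2000000 in
/-- the explicit determinant of −ωAᵀω equals that of A -/
lemma mydet_conj (A : Matrix (Fin 4) (Fin 4) ℝ) :
    mydet (-(omegaM * Aᵀ * omegaM)) = mydet A := by
  simp only [mydet, Matrix.neg_apply, Matrix.mul_apply, Matrix.transpose_apply,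
    Fin.sum_univ_four,
    show omegaM 0 0 = 0 from rfl, show omegaM 0 1 = 0 from rfl, show omegaM 0 2 = 0 from rfl,
    show omegaM 0 3 = 1 from rfl, show omegaM 1 0 = 0 from rfl, show omegaM 1 1 = 0 from rfl,
    show omegaM 1 2 = 1 from rfl, show omegaM 1 3 = 0 from rfl, show omegaM 2 0 = 0 from rfl,
    show omegaM 2 1 = -1 from rfl, show omegaM 2 2 = 0 from rfl, show omegaM 2 3 = 0 from rfl,
    show omegaM 3 0 = -1 from rfl, show omegaM 3 1 = 0 from rfl, show omegaM 3 2 = 0 from rfl,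
    show omegaM 3 3 = 0 from rfl]
  ring

lemma omega_sq : omegaM * omegaM = -1 := by
  ext i j
  fin_cases i <;> fin_cases j <;>
    simp [omegaM, Matrix.mul_apply, Fin.sum_univ_four, Matrix.one_apply,
      Matrix.vecHead, Matrix.vecTail]

lemma pair_trace (Z : Matrix (Fin 4) (Fin 4) ℝ) :
    pairOmega Z = Matrix.trace (Z * omegaMᵀ) := by
  simp only [pairOmega, Matrix.trace, Matrix.diag_apply, Matrix.mul_apply,
    Matrix.transpose_apply, Fin.sum_univ_four]

/-- for A symplectic (AᵀωA = ω), the induced action on bivectors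
    preserves ω^⊥ and preserves the quadratic form Q. (This is the homomorphism
    Sp(4,ℝ) → O(2,3).) -/
theorem symplectic_preserves_Q (A Y : Matrix (Fin 4) (Fin 4) ℝ)
    (hA : Aᵀ * omegaM * A = omegaM)
    (hanti : Yᵀ = -Y) (hperp : pairOmega Y = 0) :
    (bivAct A Y)ᵀ = -(bivAct A Y) ∧
    pairOmega (bivAct A Y) = 0 ∧
    Q (bivAct A Y) = Q Y := by
  set C : Matrix (Fin 4) (Fin 4) ℝ := -(omegaM * Aᵀ * omegaM) with hC
  have hCA : C * A = 1 := by
    have : C * A = -(omegaM * (Aᵀ * omegaM * A)) := by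
      rw [hC]; noncomm_ring
    rw [this, hA, omega_sq]
    simp
  have hinv : A⁻¹ = C := Matrix.inv_eq_left_inv hCA
  have hAC : A * C = 1 := mul_eq_one_comm.mp hCA
  have hbiv : bivAct A Y = C * Y * Cᵀ := by rw [bivAct, hinv]
  have hanti2 : (bivAct A Y)ᵀ = -(bivAct A Y) := by
    rw [hbiv]
    rw [Matrix.transpose_mul, Matrix.transpose_mul, Matrix.transpose_transpose, hanti]
    noncomm_ring
  refine ⟨hanti2, ?_, ?_⟩
  · -- pairOmega
    have hCsymp : Cᵀ * omegaM * C = omegaM := by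
      have e1 : Cᵀ * omegaM * C = Cᵀ * (Aᵀ * omegaM * A) * C := by rw [hA]
      have e2 : Cᵀ * (Aᵀ * omegaM * A) * C = (A * C)ᵀ * omegaM * (A * C) := by
        rw [Matrix.transpose_mul]
        noncomm_ring
      rw [e1, e2, hAC]
      simp
    have hCsympT : Cᵀ * omegaMᵀ * C = omegaMᵀ := by
      have h := congrArg Matrix.transpose hCsymp
      rw [Matrix.transpose_mul, Matrix.transpose_mul, Matrix.transpose_transpose] at h
      rw [Matrix.mul_assoc]
      exact h
    rw [hbiv, pair_trace]
    rw [show C * Y * Cᵀ * omegaMᵀ = (C * Y) * (Cᵀ * omegaMᵀ) from by noncomm_ring,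
      Matrix.trace_mul_comm,
      show Cᵀ * omegaMᵀ * (C * Y) = (Cᵀ * omegaMᵀ * C) * Y from by noncomm_ring,
      hCsympT, Matrix.trace_mul_comm, ← pair_trace]
    exact hperp
  · -- Q
    rw [Q_eq_pf _ hanti2, Q_eq_pf _ hanti, hbiv, pf_conj _ _ hanti]
    have hdet : mydet A = 1 := by
      have := pf_omega_conj A
      rw [hA] at this
      simp only [pf, show omegaM 0 1 = 0 from rfl, show omegaM 2 3 = 0 from rfl,
        show omegaM 0 2 = 0 from rfl, show omegaM 1 3 = 0 from rfl,
        show omegaM 0 3 = 1 from rfl, show omegaM 1 2 = 1 from rfl] at this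
      linarith
    have hdetC : mydet C = 1 := by rw [hC, mydet_conj, hdet]
    rw [hdetC]; ring
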